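/- arXiv:2501.04200 — 4 statements merged into one kernel-verified Lean document; each statement's English description precedes it below -/
import Mathlib

section
/- Let Ψ ⊆ Δ_ℓ^+ be a root ideal, M a multiset with support contained in [ℓ], γ ∈ ℤ^ℓ, and β a removable root of Ψ (i.e., Ψ \ {β} is still a root ideal). Then K(Ψ; M; γ) = K(Ψ \ {β}; M; γ) + K(Ψ; M; γ + ε_β), where ε_{(i,j)} := ε_i − ε_j. -/
open scoped BigOperators

noncomputable section

attribute [local instance] Classical.propDecidable

/-- The ring of symmetric functions over `ℚ`, modeled as the polynomial ring
`ℚ[h₁, h₂, …]` with variable `n` corresponding to the complete homogeneous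
symmetric function `h_{n+1}`. -/
abbrev Lambda : Type := MvPolynomial ℕ ℚ

/-- The complete homogeneous symmetric function `h_m` for `m : ℤ`, with the
conventions `h_m = 0` for `m < 0` and `h_0 = 1`. -/
def hh (m : ℤ) : Lambda :=
  if m < 0 then 0 else if m = 0 then 1 else MvPolynomial.X (m.toNat - 1)

/-- Generalized binomial coefficient `C(n, k)` for `n : ℤ`, `k : ℕ`. -/
def zchoose (n : ℤ) (k : ℕ) : ℤ :=
  if 0 ≤ n then n.toNat.choose k else (-1) ^ k * ((k - 1 - n).toNat.choose k)

/-- `k_m^{(r)} = ∑_{i=0}^m C(r+i-1, i) h_{m-i}` (which is `0` for `m < 0`). -/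
def kk (m : ℤ) (r : ℕ) : Lambda :=
  ∑ i ∈ Finset.range (m.toNat + 1), (zchoose ((r : ℤ) + i - 1) i : ℚ) • hh (m - i)

/-- `g_γ = det (k_{γ_i + j - i}^{(i-1)})_{1 ≤ i,j ≤ ℓ}` (here indices are 1-based;
`γ : ℕ → ℤ` is read on `[1, ℓ]`). -/
def gf (ℓ : ℕ) (γ : ℕ → ℤ) : Lambda :=
  Matrix.det (Matrix.of fun i j : Fin ℓ => kk (γ (i.1 + 1) + (j.1 : ℤ) - (i.1 : ℤ)) i.1)

/-- `Δ⁺_ℓ = {(i,j) : 1 ≤ i < j ≤ ℓ}`. -/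
def Delta (ℓ : ℕ) : Finset (ℕ × ℕ) :=
  (Finset.Icc 1 ℓ ×ˢ Finset.Icc 1 ℓ).filter fun p => p.1 < p.2

/-- A root ideal: an upper order ideal of `Δ⁺_ℓ` for the order
`(a,b) ≤ (c,d) ↔ a ≥ c ∧ b ≤ d`. -/
def IsRootIdeal (ℓ : ℕ) (Ψ : Finset (ℕ × ℕ)) : Prop :=
  Ψ ⊆ Delta ℓ ∧ ∀ p ∈ Ψ, ∀ q ∈ Delta ℓ, q.1 ≤ p.1 → p.2 ≤ q.2 → q ∈ Ψ

/-- standard basis vector `ε_z`. -/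
def eps (z : ℕ) : ℕ → ℤ := fun i => if i = z then 1 else 0

/-- `k_γ := k_{γ_1}^{(0)} ⋯ k_{γ_ℓ}^{(ℓ-1)}`. -/
def kprod (ℓ : ℕ) (γ : ℕ → ℤ) : Lambda :=
  ∏ i ∈ Finset.Icc 1 ℓ, kk (γ i) (i - 1)

/-- The net shift of `γ` produced by applying the raising operators `R_{ij}` for
all `(i,j) ∈ T`. -/
def epsR (T : Finset (ℕ × ℕ)) (i : ℕ) : ℤ :=
  ((T.filter fun p => p.1 = i).card : ℤ) - ((T.filter fun p => p.2 = i).card : ℤ)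

/-- The Katalan function
`K(Ψ; M; γ) = ∏_{z ∈ M} (1 - L_z) ∏_{(i,j) ∈ Ψ} (1 - R_{ij})⁻¹ g_γ`,
written via the equivalent finite expansion
`∏_{z ∈ M} (1 - L_z) ∏_{(i,j) ∈ Δ⁺_ℓ \ Ψ} (1 - R_{ij}) k_γ`. -/
def Katalan (ℓ : ℕ) (Ψ : Finset (ℕ × ℕ)) (M : Multiset ℕ) (γ : ℕ → ℤ) : Lambda :=
  (M.powerset.map fun S =>
    ((-1 : ℚ) ^ Multiset.card S) •
      ∑ T ∈ (Delta ℓ \ Ψ).powerset,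
        ((-1 : ℚ) ^ T.card) • kprod ℓ (fun i => γ i - S.count i + epsR T i)).sum

/-- The multiset `M` is supported in `[ℓ]`. -/
def SuppIn (ℓ : ℕ) (M : Multiset ℕ) : Prop := ∀ x ∈ M, 1 ≤ x ∧ x ≤ ℓ

/-- `L(R)`: the multiset of second components of the roots in `R`. -/
def colMultiset (R : Finset (ℕ × ℕ)) : Multiset ℕ := R.val.map Prod.snd

/-- `Δ^k(μ) = {(i,j) ∈ Δ⁺_ℓ : k - μ_i + i < j}`. -/
def Dk (ℓ k : ℕ) (μ : ℕ → ℤ) : Finset (ℕ × ℕ) :=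
  (Delta ℓ).filter fun p => (k : ℤ) - μ p.1 + (p.1 : ℤ) < (p.2 : ℤ)

/-- The (generalized) closed `k`-Schur Katalan function
`g̃_μ^{(k)} = K(Δ^k(μ); Δ^k(μ); μ)`. -/
def cKS (ℓ k : ℕ) (μ : ℕ → ℤ) : Lambda :=
  Katalan ℓ (Dk ℓ k μ) (colMultiset (Dk ℓ k μ)) μ

/-- `L_z g̃_μ^{(k)} = K(Δ^k(μ); Δ^k(μ); μ - ε_z)`. -/
def Lg (ℓ k : ℕ) (μ : ℕ → ℤ) (z : ℕ) : Lambda :=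
  Katalan ℓ (Dk ℓ k μ) (colMultiset (Dk ℓ k μ)) (fun i => μ i - eps z i)

/-- `μ ∈ P̃_ℓ^k`: `μ_i ≤ k` and `μ_1 + ℓ - 1 ≥ μ_2 + ℓ - 2 ≥ ⋯ ≥ μ_ℓ`. -/
def tP (ℓ k : ℕ) (μ : ℕ → ℤ) : Prop :=
  (∀ i, 1 ≤ i → i ≤ ℓ → μ i ≤ k) ∧ ∀ i, 1 ≤ i → i + 1 ≤ ℓ → μ (i + 1) ≤ μ i + 1

/-- `λ ∈ P_ℓ^k`: a `k`-bounded partition of length `ℓ` (weakly decreasing,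
parts in `[0, k]`, vanishing beyond row `ℓ`). -/
def IsPartition (ℓ k : ℕ) (lam : ℕ → ℤ) : Prop :=
  (∀ i, 1 ≤ i → i ≤ ℓ → 0 ≤ lam i ∧ lam i ≤ (k : ℤ)) ∧
  (∀ i, 1 ≤ i → lam (i + 1) ≤ lam i) ∧ (∀ i, ℓ < i → lam i = 0)

/-- `|λ|`, the size. -/
def psize (ℓ : ℕ) (lam : ℕ → ℤ) : ℤ := ∑ i ∈ Finset.Icc 1 ℓ, lam i

/-- A removable root of `Ψ`. -/
def Removable (ℓ : ℕ) (Ψ : Finset (ℕ × ℕ)) (p : ℕ × ℕ) : Prop :=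
  p ∈ Ψ ∧ IsRootIdeal ℓ (Ψ.erase p)

/-- An addable root of `Ψ`. -/
def Addable (ℓ : ℕ) (Ψ : Finset (ℕ × ℕ)) (p : ℕ × ℕ) : Prop :=
  p ∈ Delta ℓ ∧ p ∉ Ψ ∧ IsRootIdeal ℓ (insert p Ψ)

/-- Row `r` of `Ψ`. -/
def rowSet (Ψ : Finset (ℕ × ℕ)) (r : ℕ) : Finset ℕ :=
  (Ψ.filter fun p => p.1 = r).image Prod.snd

/-- Column `c` of `Ψ`. -/
def colSet (Ψ : Finset (ℕ × ℕ)) (c : ℕ) : Finset ℕ :=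
  (Ψ.filter fun p => p.2 = c).image Prod.fst

/-- `Ψ` has a wall in rows `r, r+1`. -/
def HasWall (Ψ : Finset (ℕ × ℕ)) (r : ℕ) : Prop :=
  (rowSet Ψ r).card = (rowSet Ψ (r + 1)).card

/-- `Ψ` has a ceiling in columns `c, c+1`. -/
def HasCeiling (Ψ : Finset (ℕ × ℕ)) (c : ℕ) : Prop :=
  (colSet Ψ c).card = (colSet Ψ (c + 1)).card

/-- `Ψ` has a mirror in rows `r, r+1`. -/
def HasMirror (ℓ : ℕ) (Ψ : Finset (ℕ × ℕ)) (r : ℕ) : Prop :=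
  ∃ c, r + 2 ≤ c ∧ c ≤ ℓ - 1 ∧ Removable ℓ Ψ (r, c) ∧ Removable ℓ Ψ (r + 1, c + 1)

/-- `b` is the bottom row of the root ideal `Ψ` (with `b = 0` if `Ψ = ∅`). -/
def IsBottom (Ψ : Finset (ℕ × ℕ)) (b : ℕ) : Prop :=
  (∀ p ∈ Ψ, p.1 ≤ b) ∧ (b = 0 ∨ ∃ q, (b, q) ∈ Ψ)

/-- `downStep ℓ Ψ x j` means `down_Ψ(x) = j`, i.e. `(x,j)` is a removable root. -/
def downStep (ℓ : ℕ) (Ψ : Finset (ℕ × ℕ)) (x j : ℕ) : Prop := Removable ℓ Ψ (x, j)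

/-- Being in the same bounce path of `Ψ`. -/
def SamePath (ℓ : ℕ) (Ψ : Finset (ℕ × ℕ)) : ℕ → ℕ → Prop :=
  Relation.EqvGen (downStep ℓ Ψ)

/-- `top_Ψ(x)`: the minimum vertex of the bounce path of `Ψ` containing `x`. -/
def topV (ℓ : ℕ) (Ψ : Finset (ℕ × ℕ)) (x : ℕ) : ℕ := sInf {y | SamePath ℓ Ψ y x}

/-- The algebra homomorphism `Λ → Λ[t]`, `f ↦ ∑_d (e_d^⊥ f) t^d`; it is the
unique algebra map sending `h_m ↦ h_m + t h_{m-1}`. -/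
def Eop : Lambda →ₐ[ℚ] Polynomial Lambda :=
  MvPolynomial.aeval fun n =>
    Polynomial.C (MvPolynomial.X n) + Polynomial.X * Polynomial.C (hh (n : ℤ))

/-- `e_d^⊥`, the Hall-adjoint of multiplication by the elementary symmetric
function `e_d`. -/
def eperp (d : ℕ) (f : Lambda) : Lambda := (Eop f).coeff d

/-- `G_{1^m}^⊥ = ∑_{i ≥ 0} (-1)^i C(m-1+i, m-1) e_{m+i}^⊥`, the Hall-adjoint of
multiplication by the stable Grothendieck polynomial `G_{1^m}`. -/
def Gperp (m : ℕ) (f : Lambda) : Lambda :=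
  (Eop f).sum fun d c =>
    (if m ≤ d then
        ((-1 : ℚ)) ^ (d - m) * ((zchoose ((m : ℤ) - 1 + ((d - m : ℕ) : ℤ)) (d - m) : ℤ) : ℚ)
      else 0) • c

lemma epsR_eq_sum (T : Finset (ℕ × ℕ)) (i : ℕ) :
    epsR T i = ∑ p ∈ T, (eps p.1 i - eps p.2 i) := by
  simp only [epsR, eps, Finset.sum_sub_distrib, Finset.natCast_card_filter, eq_comm]

lemma epsR_insert {β : ℕ × ℕ} {T : Finset (ℕ × ℕ)} (hβ : β ∉ T) (i : ℕ) :
    epsR (insert β T) i = epsR T i + eps β.1 i - eps β.2 i := by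
  rw [epsR_eq_sum, epsR_eq_sum, Finset.sum_insert hβ]
  ring

lemma Finset.sum_powerset_insert_neg_one_pow_smul {α R M : Type*} [DecidableEq α] [Ring R]
    [AddCommGroup M] [Module R M] {a : α} {s : Finset α} (ha : a ∉ s) (f : Finset α → M) :
    ∑ t ∈ (insert a s).powerset, (-1 : R) ^ t.card • f t =
      ∑ t ∈ s.powerset, (-1 : R) ^ t.card • (f t - f (insert a t)) := by
  rw [Finset.sum_powerset_insert ha, ← Finset.sum_add_distrib]
  refine Finset.sum_congr rfl fun t ht => ?_
  rw [Finset.card_insert_of_notMem fun h => ha (Finset.mem_powerset.1 ht h), pow_succ,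
    mul_neg_one, neg_smul, smul_sub, sub_eq_add_neg]

-- Erasing `β` from `Ψ` adds `β` to the complement `Δ⁺ \ Ψ`, i.e. one more factor `1 - R_β`.
lemma katalan_erase {ℓ : ℕ} {Ψ : Finset (ℕ × ℕ)} {β : ℕ × ℕ} (hβΔ : β ∈ Delta ℓ) (hβΨ : β ∈ Ψ)
    (M : Multiset ℕ) (γ : ℕ → ℤ) :
    Katalan ℓ (Ψ.erase β) M γ =
      Katalan ℓ Ψ M γ - Katalan ℓ Ψ M (fun i => γ i + eps β.1 i - eps β.2 i) := by
  have hβ : β ∉ Delta ℓ \ Ψ := fun h => (Finset.mem_sdiff.1 h).2 hβΨ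
  rw [Katalan, Katalan, Katalan, ← Multiset.sum_map_sub]
  refine congrArg _ (Multiset.map_congr rfl fun S _ => ?_)
  rw [Finset.sdiff_erase hβΔ, Finset.sum_powerset_insert_neg_one_pow_smul hβ, ← smul_sub,
    ← Finset.sum_sub_distrib]
  refine congrArg _ (Finset.sum_congr rfl fun T hT => ?_)
  have hβT : β ∉ T := fun h => hβ (Finset.mem_powerset.1 hT h)
  rw [← smul_sub]
  congr 3
  funext i
  rw [epsR_insert hβT]
  ring

theorem katalan_remove_root_general (ℓ : ℕ) (Ψ : Finset (ℕ × ℕ)) (hΨ : IsRootIdeal ℓ Ψ)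
    (M : Multiset ℕ) (γ : ℕ → ℤ) (β : ℕ × ℕ)
    (hβ : Removable ℓ Ψ β) :
    Katalan ℓ Ψ M γ =
      Katalan ℓ (Ψ.erase β) M γ +
        Katalan ℓ Ψ M (fun i => γ i + eps β.1 i - eps β.2 i) := by
  rw [katalan_erase (hΨ.1 hβ.1) hβ.1, sub_add_cancel]

/-- Removing a removable root:
`K(Ψ; M; γ) = K(Ψ \ β; M; γ) + K(Ψ; M; γ + ε_β)`. -/
theorem katalan_remove_root (ℓ : ℕ) (Ψ : Finset (ℕ × ℕ)) (hΨ : IsRootIdeal ℓ Ψ)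
    (M : Multiset ℕ) (hM : SuppIn ℓ M) (γ : ℕ → ℤ) (β : ℕ × ℕ)
    (hβ : Removable ℓ Ψ β) :
    Katalan ℓ Ψ M γ =
      Katalan ℓ (Ψ.erase β) M γ +
        Katalan ℓ Ψ M (fun i => γ i + eps β.1 i - eps β.2 i) :=
  katalan_remove_root_general ℓ Ψ hΨ M γ β hβ

end
end

section
/- Let Ψ ⊆ Δ_ℓ^+ be a root ideal, M a multiset supported in [ℓ], γ ∈ ℤ^ℓ, and d ≥ 0. Then e_d^⊥ K(Ψ; M; γ) = ∑_{S ⊆ [ℓ], |S| = d} K(Ψ; M; γ − ε_S), where ε_S := ∑_{i∈S} ε_i and e_d^⊥ is the operator adjoint to multiplication by the elementary symmetric function e_d with respect to the Hall inner product. In particular, e_d^⊥ K(Ψ; M; γ) = 0 for d > ℓ. -/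
open scoped BigOperators

noncomputable section

attribute [local instance] Classical.propDecidable

/-! `Eop` is an algebra map sending `h_m ↦ h_m + t h_{m-1}`, and `k_m^{(r)}` is a fixed linear
combination of the `h_{m-i}`, so `Eop` sends `k_m^{(r)} ↦ k_m^{(r)} + t k_{m-1}^{(r)}`. Hence
`Eop k_γ = ∏_i (k_{γ_i} + t k_{γ_i - 1})`, whose `t^d`-coefficient is `∑_{|S| = d} k_{γ - ε_S}`.
A Katalan function is a `ℚ`-linear combination of `k_{γ + δ}` with shifts `δ` independent of
`γ`, so a linear operator acting on every `k_γ` by the same family of shifts acts on Katalan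
functions in the same way. -/

theorem Polynomial.coeff_prod_C_add_X_mul_C {R ι : Type*} [CommSemiring R] [DecidableEq ι]
    (s : Finset ι) (a b : ι → R) (d : ℕ) :
    (∏ i ∈ s, (C (a i) + X * C (b i))).coeff d =
      ∑ S ∈ s.powersetCard d, (∏ i ∈ S, b i) * ∏ i ∈ s \ S, a i := by
  simp_rw [add_comm (C _), Finset.prod_add, Finset.prod_mul_distrib, Finset.prod_const,
    ← map_prod, mul_assoc, ← map_mul, X_pow_mul_C, finsetSum_coeff, coeff_C_mul_X_pow,
    Finset.powersetCard_eq_filter, Finset.sum_filter, eq_comm (a := d)]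

theorem Eop_hh (m : ℤ) :
    Eop (hh m) = Polynomial.C (hh m) + Polynomial.X * Polynomial.C (hh (m - 1)) := by
  rcases lt_trichotomy m 0 with h | rfl | h
  · simp [hh, h, show m - 1 < 0 by omega]
  · simp [hh]
  · have hm : hh m = MvPolynomial.X (m.toNat - 1) := by simp [hh, h.not_gt, h.ne']
    rw [hm, Eop, MvPolynomial.aeval_X, show ((m.toNat - 1 : ℕ) : ℤ) = m - 1 by omega]

theorem kk_sub_one (m : ℤ) (r : ℕ) :
    kk (m - 1) r = ∑ i ∈ Finset.range (m.toNat + 1),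
      (zchoose ((r : ℤ) + i - 1) i : ℚ) • hh (m - 1 - i) := by
  rcases le_or_gt m 0 with h | h
  · rw [kk, show (m - 1).toNat = m.toNat by omega]
  · rw [show m.toNat = (m - 1).toNat + 1 by omega, Finset.sum_range_succ, kk,
      show hh (m - 1 - (((m - 1).toNat + 1 : ℕ) : ℤ)) = 0 from if_pos (by omega),
      smul_zero, add_zero]

theorem Eop_kk (m : ℤ) (r : ℕ) :
    Eop (kk m r) = Polynomial.C (kk m r) + Polynomial.X * Polynomial.C (kk (m - 1) r) := by
  rw [kk, kk_sub_one, map_sum, map_sum, map_sum, Finset.mul_sum, ← Finset.sum_add_distrib]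
  refine Finset.sum_congr rfl fun i _ => ?_
  rw [map_smul, Eop_hh, smul_add, ← mul_smul_comm, Polynomial.smul_C, Polynomial.smul_C,
    sub_right_comm]

theorem eperp_kprod (ℓ d : ℕ) (γ : ℕ → ℤ) :
    eperp d (kprod ℓ γ) =
      ∑ S ∈ (Finset.Icc 1 ℓ).powersetCard d,
        kprod ℓ (fun i => γ i - if i ∈ S then 1 else 0) := by
  simp only [eperp, kprod, map_prod, Eop_kk, Polynomial.coeff_prod_C_add_X_mul_C]
  refine Finset.sum_congr rfl fun S hS => ?_
  rw [← Finset.prod_sdiff (Finset.mem_powersetCard.mp hS).1, mul_comm]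
  congr 1 <;> refine Finset.prod_congr rfl fun i hi => ?_
  · simp [(Finset.mem_sdiff.mp hi).2]
  · simp [hi]

def eperpLinearMap (d : ℕ) : Lambda →ₗ[ℚ] Lambda :=
  (Polynomial.lcoeff Lambda d).restrictScalars ℚ ∘ₗ Eop.toLinearMap

theorem map_katalan_of_map_kprod {ι : Type*} (L : Lambda →ₗ[ℚ] Lambda) (s : Finset ι)
    (δ : ι → ℕ → ℤ) (ℓ : ℕ) (hL : ∀ γ, L (kprod ℓ γ) = ∑ j ∈ s, kprod ℓ (fun i => γ i - δ j i))
    (Ψ : Finset (ℕ × ℕ)) (M : Multiset ℕ) (γ : ℕ → ℤ) :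
    L (Katalan ℓ Ψ M γ) = ∑ j ∈ s, Katalan ℓ Ψ M (fun i => γ i - δ j i) := by
  unfold Katalan
  rw [map_multiset_sum, Multiset.map_map, Finset.sum_eq_multiset_sum, Multiset.sum_map_sum_map]
  refine congrArg _ (Multiset.map_congr rfl fun S _ => ?_)
  simp only [Function.comp_apply, map_smul, map_sum, hL, ← Finset.sum_eq_multiset_sum,
    ← Finset.smul_sum]
  rw [Finset.sum_comm]
  refine congrArg _ (Finset.sum_congr rfl fun T _ => ?_)
  rw [Finset.smul_sum]
  refine Finset.sum_congr rfl fun j _ => congrArg _ (congrArg _ (funext fun i => ?_))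
  ring

theorem eperp_katalan_general (ℓ : ℕ) (Ψ : Finset (ℕ × ℕ))
    (M : Multiset ℕ) (γ : ℕ → ℤ) (d : ℕ) :
    (eperp d (Katalan ℓ Ψ M γ) =
      ∑ S ∈ (Finset.Icc 1 ℓ).powersetCard d,
        Katalan ℓ Ψ M (fun i => γ i - if i ∈ S then 1 else 0)) ∧
    (ℓ < d → eperp d (Katalan ℓ Ψ M γ) = 0) := by
  have h : eperp d (Katalan ℓ Ψ M γ) = ∑ S ∈ (Finset.Icc 1 ℓ).powersetCard d,
      Katalan ℓ Ψ M (fun i => γ i - if i ∈ S then 1 else 0) := by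
    exact map_katalan_of_map_kprod (eperpLinearMap d) _ (fun S i => if i ∈ S then 1 else 0) ℓ
      (eperp_kprod ℓ d) Ψ M γ
  refine ⟨h, fun hd => ?_⟩
  rw [h, Finset.powersetCard_eq_empty.mpr (by simpa using hd), Finset.sum_empty]

/-- `e_d^⊥ K(Ψ; M; γ) = ∑_{S ⊆ [ℓ], |S| = d} K(Ψ; M; γ - ε_S)`; in particular
it vanishes for `d > ℓ`. -/
theorem eperp_katalan (ℓ : ℕ) (Ψ : Finset (ℕ × ℕ)) (hΨ : IsRootIdeal ℓ Ψ)
    (M : Multiset ℕ) (hM : SuppIn ℓ M) (γ : ℕ → ℤ) (d : ℕ) :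
    (eperp d (Katalan ℓ Ψ M γ) =
      ∑ S ∈ (Finset.Icc 1 ℓ).powersetCard d,
        Katalan ℓ Ψ M (fun i => γ i - if i ∈ S then 1 else 0)) ∧
    (ℓ < d → eperp d (Katalan ℓ Ψ M γ) = 0) :=
  eperp_katalan_general ℓ Ψ M γ d

end
end

section
/- Let Ψ ⊆ Δ_ℓ^+ be a root ideal, M a multiset supported in [ℓ], γ ∈ ℤ^ℓ, and z ∈ [ℓ]. If n > γ_z + ℓ − z, then L_z^n K(Ψ; M; γ) = 0, i.e., K(Ψ; M; γ − n ε_z) = 0. -/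
open scoped BigOperators

noncomputable section

attribute [local instance] Classical.propDecidable

lemma kk_of_neg {m : ℤ} (h : m < 0) (r : ℕ) : kk m r = 0 := by
  simp [kk, Int.toNat_of_nonpos h.le, hh, h]

lemma kprod_eq_zero_of_neg {ℓ z : ℕ} {γ : ℕ → ℤ} (hz : z ∈ Finset.Icc 1 ℓ) (h : γ z < 0) :
    kprod ℓ γ = 0 :=
  Finset.prod_eq_zero hz (kk_of_neg h _)

lemma card_filter_fst_eq_le_sub {ℓ : ℕ} {T : Finset (ℕ × ℕ)} (hT : T ⊆ Delta ℓ) (z : ℕ) :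
    (T.filter fun p => p.1 = z).card ≤ ℓ - z := by
  rw [← Nat.card_Ioc z ℓ]
  refine Finset.card_le_card_of_injOn Prod.snd (fun p hp => ?_) (fun p hp q hq hpq => ?_)
  · simp only [Finset.coe_filter, Set.mem_ofPred_eq] at hp
    have hpΔ := hT hp.1
    simp only [Delta, Finset.mem_filter, Finset.mem_product, Finset.mem_Icc] at hpΔ
    simp only [Finset.coe_Ioc, Set.mem_Ioc]
    omega
  · simp only [Finset.coe_filter, Set.mem_ofPred_eq] at hp hq
    exact Prod.ext (hp.2.trans hq.2.symm) hpq

lemma epsR_le {ℓ z : ℕ} {T : Finset (ℕ × ℕ)} (hT : T ⊆ Delta ℓ) (hz : z ≤ ℓ) :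
    epsR T z ≤ (ℓ : ℤ) - z := by
  have := card_filter_fst_eq_le_sub hT z
  unfold epsR
  omega

/-- Every term `k_μ` of the expansion of `K(Ψ; M; γ)` has `μ_z ≤ γ_z + ℓ - z`, and `k_m^{(r)} = 0`
for `m < 0`. -/
theorem katalan_eq_zero_of_neg (ℓ : ℕ) (Ψ : Finset (ℕ × ℕ)) (M : Multiset ℕ) {γ : ℕ → ℤ}
    {z : ℕ} (hz : z ∈ Finset.Icc 1 ℓ) (h : γ z + (ℓ : ℤ) - z < 0) :
    Katalan ℓ Ψ M γ = 0 := by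
  refine Multiset.sum_eq_zero fun x hx => ?_
  obtain ⟨S, -, rfl⟩ := Multiset.mem_map.mp hx
  refine smul_eq_zero_of_right _ (Finset.sum_eq_zero fun T hT => ?_)
  have hTΔ : T ⊆ Delta ℓ := (Finset.mem_powerset.mp hT).trans Finset.sdiff_subset
  have hshift := epsR_le hTΔ (Finset.mem_Icc.mp hz).2
  refine smul_eq_zero_of_right _ (kprod_eq_zero_of_neg hz ?_)
  have := Int.natCast_nonneg (S.count z)
  omega

theorem katalan_lower_vanish_general (ℓ : ℕ) (Ψ : Finset (ℕ × ℕ))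
    (M : Multiset ℕ) (γ : ℕ → ℤ) (z : ℕ)
    (hz1 : 1 ≤ z) (hz2 : z ≤ ℓ) (n : ℕ)
    (hn : γ z + (ℓ : ℤ) - (z : ℤ) < (n : ℤ)) :
    Katalan ℓ Ψ M (fun i => γ i - (n : ℤ) * eps z i) = 0 := by
  refine katalan_eq_zero_of_neg ℓ Ψ M (Finset.mem_Icc.mpr ⟨hz1, hz2⟩) ?_
  simp only [eps, if_true, mul_one]
  omega

/-- If `n > γ_z + ℓ - z`, then `L_z^n K(Ψ; M; γ) = K(Ψ; M; γ - n ε_z) = 0`. -/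
theorem katalan_lower_vanish (ℓ : ℕ) (Ψ : Finset (ℕ × ℕ)) (hΨ : IsRootIdeal ℓ Ψ)
    (M : Multiset ℕ) (hM : SuppIn ℓ M) (γ : ℕ → ℤ) (z : ℕ)
    (hz1 : 1 ≤ z) (hz2 : z ≤ ℓ) (n : ℕ)
    (hn : γ z + (ℓ : ℤ) - (z : ℤ) < (n : ℤ)) :
    Katalan ℓ Ψ M (fun i => γ i - (n : ℤ) * eps z i) = 0 :=
  katalan_lower_vanish_general ℓ Ψ M γ z hz1 hz2 n hn

end
end

section
/- Let λ be a k-bounded partition of length ℓ, let bot be the bottom row of the root ideal Δ^k(λ) (the largest r such that row r of Δ^k(λ) is nonempty), and let z ∈ [bot+1, ℓ]. Set μ := λ − ε_z. Then L_z g̃_λ^{(k)} = g̃_μ^{(k)}, where g̃_ν^{(k)} := K(Δ^k(ν); Δ^k(ν); ν) is the (generalized) closed k-Schur Katalan function. -/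
open scoped BigOperators

noncomputable section

attribute [local instance] Classical.propDecidable

theorem mem_Dk {ℓ k : ℕ} {μ : ℕ → ℤ} {p : ℕ × ℕ} :
    p ∈ Dk ℓ k μ ↔ p ∈ Delta ℓ ∧ (k : ℤ) - μ p.1 + (p.1 : ℤ) < (p.2 : ℤ) :=
  Finset.mem_filter

-- Lowering `μ_z` only raises the threshold `k - μ_z + z` of row `z`, so it can only shrink that row.
theorem Dk_sub_eps_of_row_empty {ℓ k z : ℕ} {μ : ℕ → ℤ} (hz : ∀ p ∈ Dk ℓ k μ, p.1 ≠ z) :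
    Dk ℓ k (fun i => μ i - eps z i) = Dk ℓ k μ := by
  ext p
  by_cases hp : p.1 = z
  · have hlowered : p ∉ Dk ℓ k (fun i => μ i - eps z i) := fun hmem => by
      rw [mem_Dk, eps, if_pos hp] at hmem
      exact hz p (mem_Dk.2 ⟨hmem.1, by omega⟩) hp
    exact iff_of_false hlowered fun hmem => hz p hmem hp
  · rw [mem_Dk, mem_Dk, eps, if_neg hp, sub_zero]

theorem Lg_beyond_bottom_general (ℓ k : ℕ) (lam : ℕ → ℤ)
    (b : ℕ) (hb : IsBottom (Dk ℓ k lam) b) (z : ℕ)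
    (hz1 : b + 1 ≤ z) :
    Lg ℓ k lam z = cKS ℓ k (fun i => lam i - eps z i) := by
  have hrow : ∀ p ∈ Dk ℓ k lam, p.1 ≠ z := fun p hp => by
    have := hb.1 p hp
    omega
  rw [Lg, cKS, Dk_sub_eps_of_row_empty hrow]

/-- For `λ ∈ P_ℓ^k` and `z ∈ [bot+1, ℓ]` (rows beyond the bottom of `Δ^k(λ)`),
`L_z g̃_λ^{(k)} = g̃_{λ-ε_z}^{(k)}`. -/
theorem Lg_beyond_bottom (ℓ k : ℕ) (lam : ℕ → ℤ) (hlam : IsPartition ℓ k lam)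
    (b : ℕ) (hb : IsBottom (Dk ℓ k lam) b) (z : ℕ)
    (hz1 : b + 1 ≤ z) (hz2 : z ≤ ℓ) :
    Lg ℓ k lam z = cKS ℓ k (fun i => lam i - eps z i) :=
  Lg_beyond_bottom_general ℓ k lam b hb z hz1

end
end
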